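/- arXiv:0810.3695 — 3 statements merged into one kernel-verified Lean document; each statement's English description precedes it below -/
import Mathlib

section
/- Let H₁ and H₂ be subgroups of the Weyl–Heisenberg group G, each intersecting the center of G trivially. Then H₁ and H₂ are conjugate in G if and only if S_{H₁} = S_{H₂}. -/
/-- Dot product of two vectors over `ZMod p`. -/
def dot {p n : ℕ} (u v : Fin n → ZMod p) : ZMod p := ∑ i, u i * v i

/-- The underlying set of the Weyl–Heisenberg group: triples `(x, y, z)`. -/
@[ext] structure WH (p n : ℕ) where
  x : Fin n → ZMod p
  y : Fin n → ZMod p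
  z : ZMod p

namespace WH

variable {p n : ℕ}

/-- Multiplication `(x,y,z)·(x',y',z') = (x+x', y+y', z+z'+x'·y)`. -/
def wmul (g h : WH p n) : WH p n := ⟨g.x + h.x, g.y + h.y, g.z + h.z + dot h.x g.y⟩

def wone : WH p n := ⟨0, 0, 0⟩

def winv (g : WH p n) : WH p n := ⟨-g.x, -g.y, dot g.x g.y - g.z⟩

instance : Group (WH p n) where
  mul := wmul
  one := wone
  inv := winv
  mul_assoc g h k := by
    show wmul (wmul g h) k = wmul g (wmul h k)
    simp only [wmul, dot, mk.injEq, Pi.add_apply, mul_add, add_mul,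
      Finset.sum_add_distrib]
    refine ⟨by abel, by abel, by ring⟩
  one_mul g := by
    show wmul wone g = g
    obtain ⟨x, y, z⟩ := g
    simp [wmul, wone, dot]
  mul_one g := by
    show wmul g wone = g
    obtain ⟨x, y, z⟩ := g
    simp [wmul, wone, dot]
  inv_mul_cancel g := by
    show wmul (winv g) g = wone
    obtain ⟨x, y, z⟩ := g
    simp only [wmul, winv, wone, dot, mk.injEq, Pi.neg_apply, neg_mul]
    refine ⟨by abel, by abel, ?_⟩
    simp [Finset.sum_neg_distrib]

theorem mul_def (g h : WH p n) :
    g * h = ⟨g.x + h.x, g.y + h.y, g.z + h.z + dot h.x g.y⟩ := rfl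

theorem one_def : (1 : WH p n) = ⟨0, 0, 0⟩ := rfl

end WH

/-- `S_H`: the pairs `(x,y)` occurring in `H`. -/
def SH {p n : ℕ} (H : Subgroup (WH p n)) : Set ((Fin n → ZMod p) × (Fin n → ZMod p)) :=
  {v | ∃ z : ZMod p, (⟨v.1, v.2, z⟩ : WH p n) ∈ H}

/-- Symplectic inner product `⟨(x,y),(x',y')⟩ = x·y' - y·x'`. -/
def symp {p n : ℕ} (v w : (Fin n → ZMod p) × (Fin n → ZMod p)) : ZMod p :=
  dot v.1 w.2 - dot v.2 w.1

/-- Orthogonal complement under the symplectic inner product. -/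
def sperp {p n : ℕ} (S : Set ((Fin n → ZMod p) × (Fin n → ZMod p))) :
    Set ((Fin n → ZMod p) × (Fin n → ZMod p)) :=
  {v | ∀ s ∈ S, symp v s = 0}

/-!
Conjugation by `g = (a, b, c)` fixes `(x, y)` and shifts `z` by the symplectic pairing of
`(a, b)` with `(x, y)`, so conjugate subgroups have the same `S_H`. Conversely, if
`H ∩ Z(G) = 1` then `H` is the graph of a function `z_H` on `S_H` with
`z_H (v + w) = z_H v + z_H w + w.1 · v.2`. For two such subgroups over the same `S`, the
difference `z_{H₂} - z_{H₁}` is therefore additive on `S`; it extends to a linear functional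
on `𝔽_p^{2n}`, which by nondegeneracy of the symplectic form is `symp u` for some `u`, and
conjugation by `(u, 0)` carries `H₁` onto `H₂`.
-/

theorem AddMonoidHom.exists_zmodLinearMap_extend {p : ℕ} [Fact p.Prime] {V W : Type*}
    [AddCommGroup V] [Module (ZMod p) V] [AddCommGroup W] [Module (ZMod p) W]
    {S : AddSubgroup V} (f : S →+ W) : ∃ φ : V →ₗ[ZMod p] W, ∀ v : S, φ v = f v := by
  obtain ⟨φ, hφ⟩ :=
    LinearMap.exists_extend (p := AddSubgroup.toZModSubmodule p S) (f.toZModLinearMap p)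
  exact ⟨φ, fun v => LinearMap.congr_fun hφ v⟩

theorem exists_eq_symp {p n : ℕ}
    (φ : ((Fin n → ZMod p) × (Fin n → ZMod p)) →ₗ[ZMod p] ZMod p) :
    ∃ u, ∀ v, φ v = symp u v := by
  set e : Fin n → Fin n → ZMod p := fun i j => if i = j then 1 else 0
  refine ⟨(fun i => φ (0, e i), fun i => -φ (e i, 0)), fun v => ?_⟩
  have hsplit : φ v = φ (v.1, 0) + φ (0, v.2) := by
    rw [← map_add, Prod.mk_add_mk, add_zero, zero_add]
  have h1 : φ (v.1, 0) = ∑ i, φ (e i, 0) * v.1 i := by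
    simpa [smul_eq_mul, mul_comm] using
      (φ.comp (LinearMap.inl (ZMod p) _ _)).pi_apply_eq_sum_univ v.1
  have h2 : φ (0, v.2) = ∑ i, φ (0, e i) * v.2 i := by
    simpa [smul_eq_mul, mul_comm] using
      (φ.comp (LinearMap.inr (ZMod p) _ _)).pi_apply_eq_sum_univ v.2
  simp only [hsplit, h1, h2, symp, dot, neg_mul, Finset.sum_neg_distrib]
  ring

namespace WH

variable {p n : ℕ}

theorem mul_mul_inv_eq (g h : WH p n) :
    g * h * g⁻¹ = ⟨h.x, h.y, h.z - symp (g.x, g.y) (h.x, h.y)⟩ := by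
  show wmul (wmul g h) (winv g) = _
  simp only [wmul, winv, symp, dot, mk.injEq, Pi.add_apply, Pi.neg_apply, mul_add, neg_mul,
    Finset.sum_add_distrib, Finset.sum_neg_distrib]
  refine ⟨by abel, by abel, ?_⟩
  simp only [mul_comm (h.x _)]
  ring

theorem image_conj_eq (g : WH p n) (S : Set (WH p n)) :
    (fun h => g⁻¹ * h * g) '' S = {h | ⟨h.x, h.y, h.z - symp (g.x, g.y) (h.x, h.y)⟩ ∈ S} := by
  rw [Set.image_eq_preimage_of_inverse (f := fun h => g⁻¹ * h * g) (g := fun h => g * h * g⁻¹)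
    (fun h => by group) (fun h => by group)]
  ext h
  simp only [Set.mem_preimage, Set.mem_ofPred_eq, mul_mul_inv_eq]

theorem SH_eq_of_coe_eq_image_conj {H₁ H₂ : Subgroup (WH p n)} {g : WH p n}
    (hg : (H₂ : Set (WH p n)) = (fun h => g⁻¹ * h * g) '' (H₁ : Set (WH p n))) :
    SH H₁ = SH H₂ := by
  ext v
  have hmem (z : ZMod p) :
      (⟨v.1, v.2, z⟩ : WH p n) ∈ H₂ ↔ ⟨v.1, v.2, z - symp (g.x, g.y) v⟩ ∈ H₁ := by
    rw [← SetLike.mem_coe, hg, image_conj_eq]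
    rfl
  constructor
  · rintro ⟨z, hz⟩
    exact ⟨z + symp (g.x, g.y) v, by rwa [hmem, add_sub_cancel_right]⟩
  · rintro ⟨z, hz⟩
    exact ⟨z - symp (g.x, g.y) v, (hmem z).1 hz⟩

theorem mk_zero_zero_mem_center (c : ZMod p) :
    (⟨0, 0, c⟩ : WH p n) ∈ Subgroup.center (WH p n) := by
  rw [Subgroup.mem_center_iff]
  intro g
  ext <;> simp [mul_def, dot, add_comm]

theorem z_eq_of_mk_mem {H : Subgroup (WH p n)} (hZ : H ⊓ Subgroup.center (WH p n) = ⊥)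
    {x y : Fin n → ZMod p} {z z' : ZMod p}
    (h : (⟨x, y, z⟩ : WH p n) ∈ H) (h' : (⟨x, y, z'⟩ : WH p n) ∈ H) : z = z' := by
  have hshift : (⟨0, 0, z - z'⟩ : WH p n) * ⟨x, y, z'⟩ = ⟨x, y, z⟩ := by
    ext <;> simp [mul_def, dot]
  have hbot : (⟨0, 0, z - z'⟩ : WH p n) ∈ H ⊓ Subgroup.center (WH p n) :=
    Subgroup.mem_inf.2 ⟨eq_mul_inv_of_mul_eq hshift ▸ mul_mem h (inv_mem h'),
      mk_zero_zero_mem_center _⟩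
  rw [hZ, Subgroup.mem_bot, one_def, mk.injEq] at hbot
  exact sub_eq_zero.1 hbot.2.2

def addSubgroupSH (H : Subgroup (WH p n)) :
    AddSubgroup ((Fin n → ZMod p) × (Fin n → ZMod p)) where
  carrier := SH H
  zero_mem' := ⟨0, H.one_mem⟩
  add_mem' := by
    rintro v w ⟨zv, hv⟩ ⟨zw, hw⟩
    exact ⟨_, mul_mem hv hw⟩
  neg_mem' := by
    rintro v ⟨z, hz⟩
    exact ⟨_, inv_mem hz⟩

open Classical in
/-- The central coordinate of an element of `H` lying over `v`, unique when `H ⊓ Z(G) = ⊥`;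
`0` when `v ∉ S_H`. -/
noncomputable def zOf (H : Subgroup (WH p n)) (v : (Fin n → ZMod p) × (Fin n → ZMod p)) :
    ZMod p :=
  if hv : v ∈ SH H then hv.choose else 0

theorem mk_mem_iff {H : Subgroup (WH p n)} (hZ : H ⊓ Subgroup.center (WH p n) = ⊥)
    {x y : Fin n → ZMod p} {z : ZMod p} :
    (⟨x, y, z⟩ : WH p n) ∈ H ↔ (x, y) ∈ SH H ∧ zOf H (x, y) = z := by
  constructor
  · intro h
    have hv : (x, y) ∈ SH H := ⟨z, h⟩
    exact ⟨hv, by rw [zOf, dif_pos hv]; exact z_eq_of_mk_mem hZ hv.choose_spec h⟩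
  · rintro ⟨hv, rfl⟩
    rw [zOf, dif_pos hv]
    exact hv.choose_spec

theorem zOf_add {H : Subgroup (WH p n)} (hZ : H ⊓ Subgroup.center (WH p n) = ⊥)
    {v w : (Fin n → ZMod p) × (Fin n → ZMod p)} (hv : v ∈ SH H) (hw : w ∈ SH H) :
    zOf H (v + w) = zOf H v + zOf H w + dot w.1 v.2 := by
  have hv' := (mk_mem_iff hZ).2 ⟨hv, rfl⟩
  have hw' := (mk_mem_iff hZ).2 ⟨hw, rfl⟩
  exact ((mk_mem_iff hZ).1 (mul_mem hv' hw')).2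

theorem exists_symp_eq_zOf_sub [Fact p.Prime] {H₁ H₂ : Subgroup (WH p n)}
    (hZ₁ : H₁ ⊓ Subgroup.center (WH p n) = ⊥) (hZ₂ : H₂ ⊓ Subgroup.center (WH p n) = ⊥)
    (hS : SH H₁ = SH H₂) : ∃ u, ∀ v ∈ SH H₁, zOf H₂ v - zOf H₁ v = symp u v := by
  let δ : addSubgroupSH H₁ →+ ZMod p :=
    AddMonoidHom.mk' (fun v => zOf H₂ v - zOf H₁ v) fun v w => by
      have hv : (v : _ × _) ∈ SH H₁ := v.2
      have hw : (w : _ × _) ∈ SH H₁ := w.2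
      simp only [AddSubgroup.coe_add, zOf_add hZ₁ hv hw, zOf_add hZ₂ (hS ▸ hv) (hS ▸ hw)]
      ring
  obtain ⟨φ, hφ⟩ := δ.exists_zmodLinearMap_extend (p := p)
  obtain ⟨u, hu⟩ := exists_eq_symp φ
  exact ⟨u, fun v hv => (hφ ⟨v, hv⟩).symm.trans (hu v)⟩

theorem exists_coe_eq_image_conj_of_SH_eq [Fact p.Prime] {H₁ H₂ : Subgroup (WH p n)}
    (hZ₁ : H₁ ⊓ Subgroup.center (WH p n) = ⊥) (hZ₂ : H₂ ⊓ Subgroup.center (WH p n) = ⊥)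
    (hS : SH H₁ = SH H₂) :
    ∃ g : WH p n, (H₂ : Set (WH p n)) = (fun h => g⁻¹ * h * g) '' (H₁ : Set (WH p n)) := by
  obtain ⟨u, hu⟩ := exists_symp_eq_zOf_sub hZ₁ hZ₂ hS
  refine ⟨⟨u.1, u.2, 0⟩, ?_⟩
  rw [image_conj_eq]
  ext ⟨x, y, z⟩
  simp only [SetLike.mem_coe, Set.mem_ofPred_eq, mk_mem_iff hZ₁, mk_mem_iff hZ₂, ← hS]
  refine and_congr_right fun hv => ?_
  rw [← hu _ hv]
  constructor <;> intro h <;> linear_combination h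

end WH

theorem conjugate_iff_SH_eq_general (p n : ℕ) [Fact p.Prime]
    (H₁ H₂ : Subgroup (WH p n))
    (hZ₁ : H₁ ⊓ Subgroup.center (WH p n) = ⊥)
    (hZ₂ : H₂ ⊓ Subgroup.center (WH p n) = ⊥) :
    (∃ g : WH p n,
        (H₂ : Set (WH p n)) = (fun h => g⁻¹ * h * g) '' (H₁ : Set (WH p n))) ↔
      SH H₁ = SH H₂ :=
  ⟨fun ⟨_, hg⟩ => WH.SH_eq_of_coe_eq_image_conj hg,
    WH.exists_coe_eq_image_conj_of_SH_eq hZ₁ hZ₂⟩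

/-- Two subgroups `H₁, H₂` of the Weyl–Heisenberg group, each intersecting the center
trivially, are conjugate if and only if `S_{H₁} = S_{H₂}`. -/
theorem conjugate_iff_SH_eq (p n : ℕ) [Fact p.Prime] (hn : 1 ≤ n)
    (H₁ H₂ : Subgroup (WH p n))
    (hZ₁ : H₁ ⊓ Subgroup.center (WH p n) = ⊥)
    (hZ₂ : H₂ ⊓ Subgroup.center (WH p n) = ⊥) :
    (∃ g : WH p n,
        (H₂ : Set (WH p n)) = (fun h => g⁻¹ * h * g) '' (H₁ : Set (WH p n))) ↔
      SH H₁ = SH H₂ :=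
  conjugate_iff_SH_eq_general p n H₁ H₂ hZ₁ hZ₂
end

section
/- Every non-abelian subgroup of the Weyl–Heisenberg group G is normal in G. -/
/-! A non-abelian subgroup contains a non-trivial commutator `(0, 0, c)`. Since `ZMod p` is a
field, the powers of this element exhaust the centre `{(0, 0, t)}`, which contains every
commutator; so `H` contains the commutator subgroup, and such a subgroup is normal. -/

open scoped commutatorElement

theorem Subgroup.exists_commutatorElement_ne_one_of_not_comm {G : Type*} [Group G]
    {H : Subgroup G} (h : ¬ ∀ a ∈ H, ∀ b ∈ H, a * b = b * a) :
    ∃ a ∈ H, ∃ b ∈ H, ⁅a, b⁆ ≠ 1 := by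
  simpa only [ne_eq, commutatorElement_eq_one_iff_mul_comm, not_forall, exists_prop] using h

namespace WH

variable {p n : ℕ}

def central (t : ZMod p) : WH p n := ⟨0, 0, t⟩

theorem dot_eq_dotProduct (u v : Fin n → ZMod p) : dot u v = u ⬝ᵥ v := rfl

theorem inv_def (g : WH p n) : g⁻¹ = ⟨-g.x, -g.y, dot g.x g.y - g.z⟩ := rfl

theorem commutatorElement_eq (a b : WH p n) :
    ⁅a, b⁆ = central (dot b.x a.y - dot a.x b.y) := by
  simp only [commutatorElement_def, mul_def, inv_def, central, dot_eq_dotProduct,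
    dotProduct_add, neg_dotProduct, dotProduct_neg, mk.injEq]
  refine ⟨by abel, by abel, by ring⟩

theorem central_pow (t : ZMod p) (m : ℕ) : central t ^ m = (central (m * t) : WH p n) := by
  induction m with
  | zero => simp [central, one_def]
  | succ k ih =>
    rw [pow_succ, ih]
    simp only [central, mul_def, dot_eq_dotProduct, zero_dotProduct, mk.injEq]
    refine ⟨by simp, by simp, by push_cast; ring⟩

theorem exists_central_mem_of_not_comm {H : Subgroup (WH p n)}
    (h : ¬ ∀ a ∈ H, ∀ b ∈ H, a * b = b * a) : ∃ c ≠ 0, central c ∈ H := by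
  obtain ⟨a, ha, b, hb, hab⟩ := Subgroup.exists_commutatorElement_ne_one_of_not_comm h
  refine ⟨dot b.x a.y - dot a.x b.y, fun hc => hab ?_, ?_⟩
  · rw [commutatorElement_eq, hc]
    rfl
  · rw [← commutatorElement_eq]
    exact H.commutator_le_self (Subgroup.commutator_mem_commutator ha hb)

theorem central_mem_of_central_mem [Fact p.Prime] {H : Subgroup (WH p n)} {c : ZMod p}
    (hc : c ≠ 0) (hcH : central c ∈ H) (t : ZMod p) : central t ∈ H := by
  have := H.pow_mem hcH (t * c⁻¹).val
  rwa [central_pow, ZMod.natCast_zmod_val, inv_mul_cancel_right₀ hc] at this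

end WH

theorem nonabelian_subgroup_normal_general (p n : ℕ) [Fact p.Prime]
    (H : Subgroup (WH p n)) (h : ¬ ∀ a ∈ H, ∀ b ∈ H, a * b = b * a) :
    H.Normal := by
  obtain ⟨c, hc, hcH⟩ := WH.exists_central_mem_of_not_comm h
  refine Subgroup.Normal.of_commutator_le (h := Subgroup.commutator_le.mpr fun a _ b _ => ?_)
  rw [WH.commutatorElement_eq]
  exact WH.central_mem_of_central_mem hc hcH _

/-- Every non-abelian subgroup of the Weyl–Heisenberg group is normal. -/
theorem nonabelian_subgroup_normal (p n : ℕ) [Fact p.Prime] (hn : 1 ≤ n)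
    (H : Subgroup (WH p n)) (h : ¬ ∀ a ∈ H, ∀ b ∈ H, a * b = b * a) :
    H.Normal :=
  nonabelian_subgroup_normal_general p n H h
end

section
/- Let p be an odd prime and l a nonzero element of ℤ/pℤ. Define U on ℂ^(p^n) ⊗ ℂ^(p^n) by U|u,v⟩ = p^(−n/2) Σ_{w ∈ (ℤ/pℤ)^n} ω_p^((l·2⁻¹)·((u+v)·w)) |u−v, w⟩, where 2⁻¹ is the inverse of 2 in ℤ/pℤ. Then U is unitary, and for every g = (x,y,z) ∈ G, the matrix U (ρ_{−l}(g) ⊗ ρ_l(g)) U† is diagonal with diagonal entry ω_p^(l(w·x − s·y)) at the basis index (s,w); in particular each diagonal entry is independent of z (the Clebsch–Gordan decomposition into one-dimensional irreducibles for k+l = 0). -/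
open Matrix Kronecker

/-- The primitive `p`-th root of unity `ω_p = e^(2πi/p)`. -/
noncomputable def omega (p : ℕ) : ℂ := Complex.exp (2 * Real.pi * Complex.I / p)

/-- The `pⁿ`-dimensional representation
`ρ_k(x,y,z) = Σ_u ω_p^(k(z+y·u)) |u+x⟩⟨u|` of the Weyl–Heisenberg group,
written as a matrix indexed by the standard basis `{|u⟩ : u ∈ (ℤ/pℤ)ⁿ}`. -/
noncomputable def rho (p n : ℕ) (k : ZMod p) (g : WH p n) :
    Matrix (Fin n → ZMod p) (Fin n → ZMod p) ℂ :=
  fun a b => if a = b + g.x then omega p ^ (k * (g.z + dot g.y b)).val else 0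
/-- The Clebsch–Gordan transform
`U|u,v⟩ = p^(−n/2) Σ_w ω_p^((l·2⁻¹)((u+v)·w)) |u−v, w⟩` for `k + l = 0`. -/
noncomputable def UCG0 (p n : ℕ) (l : ZMod p) :
    Matrix ((Fin n → ZMod p) × (Fin n → ZMod p))
      ((Fin n → ZMod p) × (Fin n → ZMod p)) ℂ :=
  fun sw uv =>
    if sw.1 = uv.1 - uv.2 then
      (1 / Real.sqrt (p ^ n) : ℝ) *
        omega p ^ (l * 2⁻¹ * dot (uv.1 + uv.2) sw.2).val
    else 0

/-!
After the change of variables `(u, v) ↦ (u - v, u + v)`, which is invertible because `p` is odd,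
`U` is the identity on the first factor tensored with the Fourier transform
`|t⟩ ↦ p^(-n/2) Σ_w ψ(t·w) |w⟩` for the character `ψ(a) = ω_p^(l·2⁻¹·a)`; this character is
primitive since `l ≠ 0`, so orthogonality of characters makes the Fourier transform, hence `U`,
unitary. In the new variables `ρ_{-l}(g) ⊗ ρ_l(g)` fixes `s = u - v` up to the phase
`ω_p^(-l y·s)` (the `z`-phases cancel) and translates `t = u + v` by `2x`, and the Fourier
transform turns this translation into multiplication by `ω_p^(l w·x)`.
-/
namespace AddChar

theorem map_sum_eq_prod {A M : Type*} [AddCommMonoid A] [CommMonoid M] (ψ : AddChar A M)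
    {ι : Type*} (s : Finset ι) (f : ι → A) : ψ (∑ i ∈ s, f i) = ∏ i ∈ s, ψ (f i) := by
  classical
  induction s using Finset.induction_on with
  | empty => simp
  | insert a s ha ih => rw [Finset.sum_insert ha, Finset.prod_insert ha, map_add_eq_mul, ih]

variable {R : Type*} [CommRing R] [Fintype R] [DecidableEq R] {ψ : AddChar R ℂ}
  {ι : Type*} [Fintype ι] [DecidableEq ι]

theorem sum_dotProduct_eq_ite (hψ : ψ.IsPrimitive) (a : ι → R) :
    ∑ v : ι → R, ψ (v ⬝ᵥ a) = if a = 0 then (Fintype.card R : ℂ) ^ Fintype.card ι else 0 := by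
  simp only [dotProduct, map_sum_eq_prod]
  rw [← Fintype.prod_sum (fun i t => ψ (t * a i))]
  simp only [sum_mulShift _ hψ, Nat.cast_ite, Nat.cast_zero, Fintype.prod_ite_zero,
    Finset.prod_const, Finset.card_univ, funext_iff, Pi.zero_apply]

end AddChar

section Fourier

variable {R : Type*} [CommRing R] [Fintype R] [DecidableEq R] {ψ : AddChar R ℂ}
  {ι : Type*} [Fintype ι] [DecidableEq ι]

variable (ψ ι) in
noncomputable def fourierMatrix : Matrix (ι → R) (ι → R) ℂ :=
  of fun w t => ((1 / Real.sqrt (Fintype.card R ^ Fintype.card ι) : ℝ) : ℂ) * ψ (t ⬝ᵥ w)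

theorem fourierMatrix_mem_unitaryGroup (hψ : ψ.IsPrimitive) :
    fourierMatrix ψ ι ∈ unitaryGroup (ι → R) ℂ := by
  rw [mem_unitaryGroup_iff, star_eq_conjTranspose]
  ext w w'
  simp only [mul_apply, conjTranspose_apply, fourierMatrix, of_apply]
  set κ : ℝ := 1 / Real.sqrt (Fintype.card R ^ Fintype.card ι)
  have hκ : (κ : ℂ) * κ * (Fintype.card R : ℂ) ^ Fintype.card ι = 1 := by
    have hN : (0 : ℝ) < Fintype.card R ^ Fintype.card ι := by positivity
    have : κ * κ * (Fintype.card R : ℝ) ^ Fintype.card ι = 1 := by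
      rw [div_mul_div_comm, one_mul, Real.mul_self_sqrt hN.le, one_div_mul_cancel hN.ne']
    exact_mod_cast this
  have hterm (t : ι → R) :
      κ * ψ (t ⬝ᵥ w) * star (κ * ψ (t ⬝ᵥ w')) = κ * κ * ψ (t ⬝ᵥ (w - w')) := by
    rw [star_mul', Complex.star_def, Complex.conj_ofReal, ← AddChar.map_neg_eq_conj,
      dotProduct_sub, sub_eq_add_neg, AddChar.map_add_eq_mul]
    ring
  simp only [hterm, ← Finset.mul_sum, AddChar.sum_dotProduct_eq_ite hψ, sub_eq_zero,
    one_apply]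
  split_ifs <;> simp [hκ]

end Fourier

theorem Matrix.submatrix_mem_unitaryGroup {m n α : Type*} [Fintype m] [DecidableEq m]
    [Fintype n] [DecidableEq n] [CommRing α] [StarRing α] {A : Matrix m m α}
    (hA : A ∈ unitaryGroup m α) (e₁ e₂ : n ≃ m) : A.submatrix e₁ e₂ ∈ unitaryGroup n α := by
  rw [mem_unitaryGroup_iff, star_eq_conjTranspose, conjTranspose_submatrix, submatrix_mul_equiv,
    ← star_eq_conjTranspose, mem_unitaryGroup_iff.1 hA, submatrix_one_equiv]

def subAddEquiv (R : Type*) {M : Type*} [Ring R] [Invertible (2 : R)] [AddCommGroup M]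
    [Module R M] : M × M ≃ M × M where
  toFun x := (x.1 - x.2, x.1 + x.2)
  invFun y := ((⅟2 : R) • (y.2 + y.1), (⅟2 : R) • (y.2 - y.1))
  left_inv x := by
    ext <;> simp only [add_add_sub_cancel, add_sub_sub_cancel, ← two_smul R, smul_smul,
      invOf_mul_self, one_smul]
  right_inv y := by
    ext <;> simp only [← smul_sub, ← smul_add, add_sub_sub_cancel, add_add_sub_cancel,
      ← two_smul R, smul_smul, invOf_mul_self, one_smul]

open ZMod

section WeylHeisenberg

variable {p n : ℕ}

theorem dot_eq_dotProduct (u v : Fin n → ZMod p) : dot u v = u ⬝ᵥ v := rfl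

theorem omega_pow_val [NeZero p] (a : ZMod p) : omega p ^ a.val = stdAddChar a := by
  rw [stdAddChar_apply, toCircle_apply, omega, ← Complex.exp_nat_mul]
  ring_nf

theorem rho_apply [NeZero p] (k : ZMod p) (g : WH p n) (a b : Fin n → ZMod p) :
    rho p n k g a b = if a = b + g.x then stdAddChar (k * (g.z + g.y ⬝ᵥ b)) else 0 := by
  rw [rho, omega_pow_val, dot_eq_dotProduct]

theorem mul_kronecker_rho_apply [NeZero p] {m : Type*}
    (M : Matrix m ((Fin n → ZMod p) × (Fin n → ZMod p)) ℂ) (k k' : ZMod p) (g : WH p n)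
    (i : m) (u v : Fin n → ZMod p) :
    (M * (rho p n k g ⊗ₖ rho p n k' g)) i (u, v) =
      M i (u + g.x, v + g.x) *
        (stdAddChar (k * (g.z + g.y ⬝ᵥ u)) * stdAddChar (k' * (g.z + g.y ⬝ᵥ v))) := by
  simp only [mul_apply, Fintype.sum_prod_type, kroneckerMap_apply, rho_apply, ite_mul, mul_ite,
    zero_mul, mul_zero, Finset.sum_ite_eq', Finset.mem_univ, if_true]

theorem UCG0_apply [NeZero p] (l : ZMod p) (s w u v : Fin n → ZMod p) :
    UCG0 p n l (s, w) (u, v) =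
      if s = u - v then
        ((1 / Real.sqrt (p ^ n) : ℝ) : ℂ) * stdAddChar (l * 2⁻¹ * ((u + v) ⬝ᵥ w))
      else 0 := by
  rw [UCG0, omega_pow_val, dot_eq_dotProduct]

theorem UCG0_eq_submatrix [NeZero p] [Invertible (2 : ZMod p)] (l : ZMod p) :
    UCG0 p n l =
      ((1 : Matrix (Fin n → ZMod p) (Fin n → ZMod p) ℂ) ⊗ₖ
        fourierMatrix ((stdAddChar : AddChar (ZMod p) ℂ).mulShift (l * 2⁻¹)) (Fin n)).submatrix
        (Equiv.refl _) (subAddEquiv (ZMod p)) := by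
  ext ⟨s, w⟩ ⟨u, v⟩
  simp [UCG0_apply, subAddEquiv, fourierMatrix, one_apply, AddChar.mulShift_apply]

variable [Fact p.Prime] [Invertible (2 : ZMod p)]

theorem UCG0_mem_unitaryGroup {l : ZMod p} (hl : l ≠ 0) :
    UCG0 p n l ∈ unitaryGroup ((Fin n → ZMod p) × (Fin n → ZMod p)) ℂ := by
  have hψ : ((stdAddChar : AddChar (ZMod p) ℂ).mulShift (l * 2⁻¹)).IsPrimitive :=
    AddChar.IsPrimitive.of_ne_one <|
      isPrimitive_stdAddChar p (mul_ne_zero hl (inv_ne_zero (Invertible.ne_zero 2)))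
  rw [UCG0_eq_submatrix]
  exact submatrix_mem_unitaryGroup
    (kronecker_mem_unitary (one_mem _) (fourierMatrix_mem_unitaryGroup hψ)) _ _

theorem UCG0_mul_kronecker_rho (l : ZMod p) (g : WH p n) :
    UCG0 p n l * (rho p n (-l) g ⊗ₖ rho p n l g) =
      diagonal (fun sw => stdAddChar (l * (sw.2 ⬝ᵥ g.x - sw.1 ⬝ᵥ g.y))) * UCG0 p n l := by
  ext ⟨s, w⟩ ⟨u, v⟩
  rw [mul_kronecker_rho_apply, diagonal_mul, UCG0_apply, UCG0_apply, add_sub_add_right_eq_sub]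
  split_ifs with hs
  · subst hs
    have h2 : (2 : ZMod p)⁻¹ * 2 = 1 := inv_mul_cancel₀ (Invertible.ne_zero 2)
    rw [← AddChar.map_add_eq_mul, mul_assoc, ← AddChar.map_add_eq_mul, mul_left_comm,
      ← AddChar.map_add_eq_mul]
    congr 2
    simp only [add_dotProduct, sub_dotProduct, dotProduct_comm w, dotProduct_comm g.y]
    linear_combination (l * g.x ⬝ᵥ w) * h2
  · simp

end WeylHeisenberg

theorem clebsch_gordan_zero_general (p n : ℕ) [Fact p.Prime] (hp : p ≠ 2)
    (l : ZMod p) (hl : l ≠ 0) :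
    (UCG0 p n l * (UCG0 p n l)ᴴ = 1 ∧ (UCG0 p n l)ᴴ * UCG0 p n l = 1) ∧
      ∀ g : WH p n,
        UCG0 p n l * (rho p n (-l) g ⊗ₖ rho p n l g) * (UCG0 p n l)ᴴ =
          Matrix.diagonal
            (fun sw : (Fin n → ZMod p) × (Fin n → ZMod p) =>
              omega p ^ (l * (dot sw.2 g.x - dot sw.1 g.y)).val) := by
  have : Invertible (2 : ZMod p) :=
    invertibleOfNonzero (Ring.two_ne_zero (by rwa [ringChar_zmod_n]))
  obtain ⟨hUstarU, hUUstar⟩ := Unitary.mem_iff.1 (UCG0_mem_unitaryGroup (n := n) hl)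
  refine ⟨⟨hUUstar, hUstarU⟩, fun g => ?_⟩
  rw [UCG0_mul_kronecker_rho, Matrix.mul_assoc, ← star_eq_conjTranspose, hUUstar, Matrix.mul_one]
  simp only [omega_pow_val, dot_eq_dotProduct]

/-- Clebsch–Gordan decomposition into one-dimensional irreducibles for `k + l = 0`
(`p` odd, `l ≠ 0`): `U` is unitary, and `U (ρ_{−l}(g) ⊗ ρ_l(g)) U†` is diagonal with
entry `ω_p^(l(w·x − s·y))` at basis index `(s,w)`; in particular the diagonal entries
do not depend on `z`. -/
theorem clebsch_gordan_zero (p n : ℕ) [Fact p.Prime] (hp : p ≠ 2) (hn : 1 ≤ n)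
    (l : ZMod p) (hl : l ≠ 0) :
    (UCG0 p n l * (UCG0 p n l)ᴴ = 1 ∧ (UCG0 p n l)ᴴ * UCG0 p n l = 1) ∧
      ∀ g : WH p n,
        UCG0 p n l * (rho p n (-l) g ⊗ₖ rho p n l g) * (UCG0 p n l)ᴴ =
          Matrix.diagonal
            (fun sw : (Fin n → ZMod p) × (Fin n → ZMod p) =>
              omega p ^ (l * (dot sw.2 g.x - dot sw.1 g.y)).val) :=
  clebsch_gordan_zero_general p n hp l hl
end
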